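/- arXiv:2208.03241 — 3 statements merged into one kernel-verified Lean document; each statement's English description precedes it below -/
import Mathlib

section
/- Trickling Down Theorem. Let (X, w) be a weighted pure d-dimensional simplicial complex with d ≥ 2 such that (i) for every vertex v ∈ X(0), the 1-skeleton of the link X_v is a λ-spectral expander, where 0 ≤ λ < 1, and (ii) the 1-skeleton of X is connected. Then the 1-skeleton of X is a (λ/(1−λ))-spectral expander. -/
/-!
Weighted pure simplicial complexes, links, cochains, signless differentials
and high dimensional random walk operators.

Conventions: faces are `Finset`s of vertices. A cochain "of dimension `k`"
(an element of `C^k(X;ℝ)`) is represented by a function `Finset V → ℝ`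
evaluated on faces of **cardinality** `c = k + 1`; all operators are indexed
by cardinality.
-/

open Finset

namespace HDRW

noncomputable section

variable {V : Type*} [DecidableEq V] [Fintype V]

/-- A weighted family of faces (the data of a weighted complex or of a link). -/
structure WFam (V : Type*) [DecidableEq V] [Fintype V] where
  faces : Finset (Finset V)
  w : Finset V → ℝ

namespace WFam

/-- The faces of cardinality `c` (i.e. of dimension `c - 1`). -/
def dimFaces (Y : WFam V) (c : ℕ) : Finset (Finset V) :=
  Y.faces.filter fun σ => σ.card = c

/-- The link of a face `τ`, as a weighted family; the weights are
`w_τ(s) = w (s ∪ τ) / (C(|s| + |τ|, |τ|) * w τ)`. -/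
def link (Y : WFam V) (τ : Finset V) : WFam V where
  faces := Finset.univ.powerset.filter fun s => Disjoint s τ ∧ s ∪ τ ∈ Y.faces
  w := fun s => Y.w (s ∪ τ) / (((s.card + τ.card).choose τ.card : ℝ) * Y.w τ)

/-- The inner product of two `c`-cochains: `⟨f, g⟩ = Σ_{σ} w σ * f σ * g σ`. -/
def inner (Y : WFam V) (c : ℕ) (f g : Finset V → ℝ) : ℝ :=
  ∑ σ ∈ Y.dimFaces c, Y.w σ * (f σ * g σ)

/-- The squared norm `‖f‖² = ⟨f, f⟩` of a `c`-cochain. -/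
def norm2 (Y : WFam V) (c : ℕ) (f : Finset V → ℝ) : ℝ := Y.inner c f f

end WFam

/-- The signless differential `d` from cochains on faces of cardinality `c`
(dimension `c-1`) to cochains on faces of cardinality `c+1`:
`(d f)(σ) = (1/(c+1)) Σ_{τ ⊆ σ, |τ| = c} f τ`. -/
def sDiff (c : ℕ) (f : Finset V → ℝ) : Finset V → ℝ :=
  fun σ => ((c : ℝ) + 1)⁻¹ * ∑ τ ∈ σ.powerset.filter (fun τ => τ.card = c), f τ

/-- Iterated signless differential `C_a → C_{a+n}` (in cardinality indexing),
i.e. `d_{a+n-2} ⋯ d_{a-1}` in dimension indexing. -/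
def sDiffIter (a : ℕ) : ℕ → (Finset V → ℝ) → (Finset V → ℝ)
  | 0, f => f
  | n + 1, f => sDiff (a + n) (sDiffIter a n f)

namespace WFam

/-- The adjoint `d^*` of the signless differential, from cochains on faces of
cardinality `c+1` to cochains on faces of cardinality `c`; it is given by the
explicit formula `(d^* f)(τ) = Σ_{σ ∈ X(c), τ ⊆ σ} w_τ(σ ∖ τ) * f σ` (a sum
over the cardinality-`(c+1)` faces containing `τ`). -/
def sAdj (Y : WFam V) (c : ℕ) (f : Finset V → ℝ) : Finset V → ℝ :=
  fun τ => ∑ σ ∈ (Y.dimFaces (c + 1)).filter (fun σ => τ ⊆ σ),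
    (Y.link τ).w (σ \ τ) * f σ

/-- Iterated adjoint of the signless differential, `C_{a+n} → C_a`
(in cardinality indexing), i.e. `d_{a-1}^* ⋯ d_{a+n-2}^*`. -/
def sAdjIter (Y : WFam V) : ℕ → ℕ → (Finset V → ℝ) → (Finset V → ℝ)
  | _, 0, f => f
  | a, n + 1, f => Y.sAdj a (sAdjIter Y (a + 1) n f)

/-- The non-lazy up-down random walk operator `M⁺` on cochains of cardinality
`c` (dimension `k = c-1`): `(M⁺ f)(σ) = (1/(k+1)) Σ_{τ, σ ∪ τ ∈ X(k+1)} w_σ(τ∖σ) f τ`. -/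
def nonLazy (Y : WFam V) (c : ℕ) (f : Finset V → ℝ) : Finset V → ℝ :=
  fun σ => (c : ℝ)⁻¹ *
    ∑ τ ∈ (Y.dimFaces c).filter (fun τ => σ ∪ τ ∈ Y.dimFaces (c + 1)),
      (Y.link σ).w (τ \ σ) * f τ

/-- The (lazy) up-down random walk operator `U` on cochains of cardinality `c`
(dimension `k = c-1`):
`(U f)(σ) = (1/(k+2)) f σ + (1/(k+2)) Σ_{τ, σ ∪ τ ∈ X(k+1)} w_σ(τ∖σ) f τ`. -/
def upDown (Y : WFam V) (c : ℕ) (f : Finset V → ℝ) : Finset V → ℝ :=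
  fun σ => ((c : ℝ) + 1)⁻¹ * f σ + ((c : ℝ) + 1)⁻¹ *
    ∑ τ ∈ (Y.dimFaces c).filter (fun τ => σ ∪ τ ∈ Y.dimFaces (c + 1)),
      (Y.link σ).w (τ \ σ) * f τ

/-- The down-up random walk operator `D` on cochains of cardinality `c`
(dimension `k = c-1`). -/
def downUp (Y : WFam V) (c : ℕ) (f : Finset V → ℝ) : Finset V → ℝ :=
  fun σ => (c : ℝ)⁻¹ *
      (∑ τ' ∈ σ.powerset.filter (fun τ' => τ'.card = c - 1), (Y.link τ').w (σ \ τ')) * f σ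
    + (c : ℝ)⁻¹ *
      ∑ τ ∈ (Y.dimFaces c).filter (fun τ => τ ≠ σ ∧ σ ∩ τ ∈ Y.dimFaces (c - 1)),
        (Y.link (σ ∩ τ)).w (τ \ σ) * f τ

/-- The `i`-down-up operator `D^i = d ⋯ d d^* ⋯ d^*` (going down `i+1` steps and
back up) on cochains of cardinality `c` (dimension `k = c-1`); in dimension
indexing this is `D_k^i = d_{k-1} ⋯ d_{k-i-1} d_{k-i-1}^* ⋯ d_{k-1}^*`. -/
def downUpIter (Y : WFam V) (c i : ℕ) (f : Finset V → ℝ) : Finset V → ℝ :=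
  sDiffIter (c - (i + 1)) (i + 1) (Y.sAdjIter (c - (i + 1)) (i + 1) f)

/-- `Y` (through its 1-skeleton) is a `γ`-(one sided) spectral expander:
every function on the vertices orthogonal to the constants has Rayleigh
quotient of the non-lazy random walk at most `γ` (Rayleigh characterization of
"the second largest eigenvalue of `M₀⁺` is at most `γ`"). -/
def isExpander (Y : WFam V) (γ : ℝ) : Prop :=
  ∀ f : Finset V → ℝ, Y.inner 1 f (fun _ => 1) = 0 →
    Y.inner 1 (Y.nonLazy 1 f) f ≤ γ * Y.norm2 1 f

/-- `Y` (through its 1-skeleton) is connected: the eigenvalue `1` of the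
non-lazy random walk `M₀⁺` has multiplicity one, i.e. every nonzero function on
the vertices orthogonal to the constants has Rayleigh quotient strictly
less than `1`. -/
def isConnected (Y : WFam V) : Prop :=
  ∀ f : Finset V → ℝ, Y.inner 1 f (fun _ => 1) = 0 → Y.norm2 1 f ≠ 0 →
    Y.inner 1 (Y.nonLazy 1 f) f < Y.norm2 1 f

/-- `f` is an `i`-level cochain of cardinality `c` (dimension `k = c-1`) with
respect to localization: for every face `σ` of cardinality `i` (i.e. of
dimension `i-1`), the localization `f_σ` is orthogonal to the constants in the
link `X_σ`. -/
def isLevel (Y : WFam V) (i c : ℕ) (f : Finset V → ℝ) : Prop :=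
  ∀ σ ∈ Y.dimFaces i,
    (Y.link σ).inner (c - i) (fun s => f (σ ∪ s)) (fun _ => 1) = 0

/-- `f` is a proper `i`-level cochain of cardinality `c`: it is an `i`-level
cochain which is in addition orthogonal to every `(i+1)`-level cochain. -/
def isProperLevel (Y : WFam V) (i c : ℕ) (f : Finset V → ℝ) : Prop :=
  Y.isLevel i c f ∧ ∀ g : Finset V → ℝ, Y.isLevel (i + 1) c g → Y.inner c f g = 0

end WFam

/-- The coboundary operator on oriented cochains (represented by their values
on the increasing ordering of each face, with respect to a linear order on the
vertices): `(δ f)(σ) = Σ_{j} (-1)^j f(σ ∖ {j-th smallest element of σ})`. -/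
def coboundary {V : Type*} [LinearOrder V] [Fintype V] (f : Finset V → ℝ) :
    Finset V → ℝ :=
  fun σ => ∑ v ∈ σ, (-1 : ℝ) ^ (σ.filter (fun u => u < v)).card * f (σ.erase v)

/-- A weighted pure `d`-dimensional simplicial complex: a downward closed
family of faces, each contained in a face of cardinality `d+1`
(dimension `d`), together with a weight function `w : X → (0, 1]` summing to
`1` on the top faces and satisfying the averaging recurrence on lower faces. -/
structure WSC (V : Type*) [DecidableEq V] [Fintype V] (d : ℕ) extends WFam V where
  empty_mem : ∅ ∈ faces
  down_closed : ∀ ⦃σ⦄, σ ∈ faces → ∀ ⦃τ⦄, τ ⊆ σ → τ ∈ faces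
  isPure : ∀ σ ∈ faces, ∃ σ' ∈ faces, σ ⊆ σ' ∧ σ'.card = d + 1
  w_pos : ∀ σ ∈ faces, 0 < w σ
  w_le_one : ∀ σ ∈ faces, w σ ≤ 1
  w_sum_top : ∑ σ ∈ faces.filter (fun σ => σ.card = d + 1), w σ = 1
  w_down : ∀ τ ∈ faces, τ.card ≤ d →
    w τ = (((d + 1).choose τ.card : ℝ))⁻¹ *
      ∑ σ ∈ faces.filter (fun σ => σ.card = d + 1 ∧ τ ⊆ σ), w σ


/-!
Localization: the quadratic form `⟨M f, f⟩` and the norm `‖f‖²` of `X` are the `w`-averages over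
the vertices `v` of the same quantities in the links `X_v`, and the mean of `f` over `X_v` is
`(M f)(v)`. Applying the expansion of each `X_v` to `f` minus this mean and averaging gives
`⟨M f, f⟩ ≤ λ ‖f‖² + (1 - λ) ‖M f‖²`. For an eigenvector of `M` orthogonal to the constants, with
eigenvalue `μ`, this reads `(1 - μ) (λ - (1 - λ) μ) ≥ 0`; connectedness gives `μ < 1`, hence
`μ ≤ λ / (1 - λ)`.
-/

open scoped RealInnerProductSpace

section Spectral

variable {E : Type*} [NormedAddCommGroup E] [InnerProductSpace ℝ E] {T : E →ₗ[ℝ] E}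

lemma _root_.LinearMap.IsSymmetric.inner_map_self_le_of_forall_hasEigenvalue_le
    [FiniteDimensional ℝ E] (hT : T.IsSymmetric) {c : ℝ}
    (hc : ∀ μ, Module.End.HasEigenvalue T μ → μ ≤ c) (x : E) :
    ⟪T x, x⟫ ≤ c * ⟪x, x⟫ := by
  rcases eq_or_ne x 0 with rfl | hx
  · simp
  have : Nontrivial E := nontrivial_of_ne x 0 hx
  have hbdd : BddAbove (Set.range fun y : { y : E // y ≠ 0 } =>
      RCLike.re ⟪T y, (y : E)⟫ / ‖(y : E)‖ ^ 2) := by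
    refine ⟨‖LinearMap.toContinuousLinearMap T‖, ?_⟩
    rintro r ⟨y, rfl⟩
    exact le_of_abs_le ((LinearMap.toContinuousLinearMap T).rayleighQuotient_le_norm y)
  have hx_le : ⟪T x, x⟫ / ⟪x, x⟫ ≤ c := by
    refine le_trans ?_ (hc _ hT.hasEigenvalue_iSup_of_finiteDimensional)
    simpa [real_inner_self_eq_norm_sq] using le_ciSup hbdd ⟨x, hx⟩
  rwa [div_le_iff₀ (real_inner_self_pos.2 hx)] at hx_le

lemma _root_.LinearMap.IsSymmetric.inner_map_self_le_div_one_sub [FiniteDimensional ℝ E]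
    (hT : T.IsSymmetric) {lam : ℝ} (h1 : lam < 1)
    (hkey : ∀ x, ⟪T x, x⟫ ≤ lam * ⟪x, x⟫ + (1 - lam) * ⟪T x, T x⟫)
    (hlt : ∀ x, x ≠ 0 → ⟪T x, x⟫ < ⟪x, x⟫) (x : E) :
    ⟪T x, x⟫ ≤ lam / (1 - lam) * ⟪x, x⟫ := by
  refine hT.inner_map_self_le_of_forall_hasEigenvalue_le (fun μ hμ => ?_) x
  obtain ⟨v, hv⟩ := hμ.exists_hasEigenvector
  have hTv : T v = μ • v := hv.apply_eq_smul
  have hvv : 0 < ⟪v, v⟫ := real_inner_self_pos.2 hv.2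
  have hμ1 : μ < 1 := by
    have := hlt v hv.2
    rw [hTv, real_inner_smul_left] at this
    nlinarith
  have hμ : μ ≤ lam + (1 - lam) * μ ^ 2 := by
    have := hkey v
    rw [hTv, real_inner_smul_left, real_inner_smul_left, real_inner_smul_right] at this
    nlinarith
  rw [le_div_iff₀ (by linarith)]
  nlinarith

lemma _root_.LinearMap.IsSymmetric.inner_map_self_le_div_one_sub_of_inner_eq_zero
    [FiniteDimensional ℝ E] (hT : T.IsSymmetric) {lam : ℝ} (h1 : lam < 1) {e : E}
    (he : ∀ x, ⟪T x, e⟫ = ⟪x, e⟫)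
    (hkey : ∀ x, ⟪x, e⟫ = 0 → ⟪T x, x⟫ ≤ lam * ⟪x, x⟫ + (1 - lam) * ⟪T x, T x⟫)
    (hlt : ∀ x, ⟪x, e⟫ = 0 → x ≠ 0 → ⟪T x, x⟫ < ⟪x, x⟫) {x : E} (hx : ⟪x, e⟫ = 0) :
    ⟪T x, x⟫ ≤ lam / (1 - lam) * ⟪x, x⟫ := by
  set K := (ℝ ∙ e)ᗮ
  have hK : ∀ y, y ∈ K ↔ ⟪y, e⟫ = 0 := fun y => by
    rw [Submodule.mem_orthogonal_singleton_iff_inner_right, real_inner_comm]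
  have hTK : ∀ y ∈ K, T y ∈ K := fun y hy => by rwa [hK, he, ← hK]
  have hS : (T.restrict hTK).IsSymmetric := fun y z => hT y z
  simpa using hS.inner_map_self_le_div_one_sub h1 (fun y => hkey y ((hK y).1 y.2))
    (fun y hy => hlt y ((hK y).1 y.2) (by simpa using hy)) ⟨x, (hK x).2 hx⟩

lemma _root_.LinearMap.IsSymmetric.inner_map_self_le_add_inner_sq (hT : T.IsSymmetric)
    {lam : ℝ} {e : E} (he1 : ⟪e, e⟫ = 1) (he : ∀ x, ⟪T x, e⟫ = ⟪x, e⟫)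
    (hexp : ∀ y, ⟪y, e⟫ = 0 → ⟪T y, y⟫ ≤ lam * ⟪y, y⟫) (x : E) :
    ⟪T x, x⟫ ≤ lam * ⟪x, x⟫ + (1 - lam) * ⟪x, e⟫ ^ 2 := by
  set c := ⟪x, e⟫
  have hy : ⟪x - c • e, e⟫ = 0 := by
    rw [inner_sub_left, real_inner_smul_left, he1, mul_one, sub_self]
  have hTe : ⟪T e, x⟫ = c := by rw [hT e x, real_inner_comm, he]
  have := hexp _ hy
  simp only [map_sub, map_smul, inner_sub_left, inner_sub_right, real_inner_smul_left,
    real_inner_smul_right, he, he1, hTe, real_inner_comm x e] at this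
  nlinarith

end Spectral

lemma _root_.Finset.card_eq_and_disjoint_of_card_union {α : Type*} [DecidableEq α]
    {s t : Finset α} {k l : ℕ} (hs : s.card ≤ k) (ht : t.card ≤ l) (h : (s ∪ t).card = k + l) :
    s.card = k ∧ t.card = l ∧ Disjoint s t := by
  have := card_union_le s t
  exact ⟨by omega, by omega, card_union_eq_card_add_card.1 (by omega)⟩

namespace WFam

variable (Z : WFam V)

def weightOn (c : ℕ) (σ : Finset V) : ℝ := if σ ∈ Z.dimFaces c then Z.w σ else 0

lemma sum_dimFaces_eq_sum_weightOn {c : ℕ} {S : Finset (Finset V)} (hS : Z.dimFaces c ⊆ S)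
    (g : Finset V → ℝ) :
    ∑ s ∈ Z.dimFaces c, Z.w s * g s = ∑ s ∈ S, Z.weightOn c s * g s := by
  rw [← sum_subset hS fun s _ hs => by simp [weightOn, hs]]
  exact sum_congr rfl fun s hs => by simp [weightOn, hs]

lemma nonLazy_one_apply (f : Finset V → ℝ) {s : Finset V} (hs : s ∈ Z.dimFaces 1) :
    Z.nonLazy 1 f s = (2 * Z.w s)⁻¹ * ∑ t ∈ Z.dimFaces 1, Z.weightOn 2 (s ∪ t) * f t := by
  rw [nonLazy, Nat.cast_one, inv_one, one_mul, sum_filter, mul_sum]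
  refine sum_congr rfl fun t ht => ?_
  unfold weightOn
  split_ifs with hst
  · have hs1 := (mem_filter.1 hs).2
    have ht1 := (mem_filter.1 ht).2
    have hdisj : Disjoint t s := by
      rw [← card_union_eq_card_add_card, union_comm, (mem_filter.1 hst).2, hs1, ht1]
    simp only [link, sdiff_eq_self_of_disjoint hdisj, ht1, hs1, union_comm t s]
    norm_num
    ring
  · simp

lemma nonLazy_congr {c : ℕ} {f g : Finset V → ℝ} (h : ∀ t ∈ Z.dimFaces c, f t = g t) :
    Z.nonLazy c f = Z.nonLazy c g := by
  ext σ
  refine congrArg _ (sum_congr rfl fun t ht => ?_)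
  rw [h t (mem_filter.1 ht).1]

lemma inner_nonLazy_one_eq_sum (hpos : ∀ s ∈ Z.dimFaces 1, 0 < Z.w s) (f g : Finset V → ℝ) :
    Z.inner 1 (Z.nonLazy 1 f) g
      = ∑ s ∈ Z.dimFaces 1, ∑ t ∈ Z.dimFaces 1, Z.weightOn 2 (s ∪ t) / 2 * (f t * g s) := by
  refine sum_congr rfl fun s hs => ?_
  have := (hpos s hs).ne'
  rw [Z.nonLazy_one_apply f hs, mul_sum, sum_mul, mul_sum]
  exact sum_congr rfl fun t _ => by field_simp

lemma inner_nonLazy_one_comm (hpos : ∀ s ∈ Z.dimFaces 1, 0 < Z.w s) (f g : Finset V → ℝ) :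
    Z.inner 1 (Z.nonLazy 1 f) g = Z.inner 1 (Z.nonLazy 1 g) f := by
  rw [Z.inner_nonLazy_one_eq_sum hpos, Z.inner_nonLazy_one_eq_sum hpos, sum_comm]
  simp only [union_comm, mul_comm (f _)]

def IsBalanced : Prop :=
  ∀ t ∈ Z.dimFaces 1, ∑ s ∈ Z.dimFaces 1, Z.weightOn 2 (s ∪ t) = 2 * Z.w t

variable {Z}

lemma IsBalanced.inner_nonLazy_one_const (hZ : Z.IsBalanced)
    (hpos : ∀ s ∈ Z.dimFaces 1, 0 < Z.w s) (f : Finset V → ℝ) :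
    Z.inner 1 (Z.nonLazy 1 f) (fun _ => 1) = Z.inner 1 f (fun _ => 1) := by
  rw [Z.inner_nonLazy_one_eq_sum hpos, sum_comm]
  refine sum_congr rfl fun t ht => ?_
  simp only [mul_one, ← sum_div, ← sum_mul, hZ t ht]
  ring

lemma IsBalanced.nonLazy_one_const (hZ : Z.IsBalanced) (hpos : ∀ s ∈ Z.dimFaces 1, 0 < Z.w s)
    {s : Finset V} (hs : s ∈ Z.dimFaces 1) : Z.nonLazy 1 (fun _ => 1) s = 1 := by
  have := (hpos s hs).ne'
  simp only [Z.nonLazy_one_apply _ hs, mul_one, union_comm s, hZ s hs]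
  field_simp

lemma mem_link_dimFaces {σ s : Finset V} {j : ℕ} (hs : s.card ≤ j) :
    s ∈ (Z.link σ).dimFaces j ↔ s ∪ σ ∈ Z.dimFaces (j + σ.card) := by
  simp only [dimFaces, link, mem_filter, mem_powerset, subset_univ, true_and]
  constructor
  · rintro ⟨⟨hdisj, hZ⟩, rfl⟩
    exact ⟨hZ, card_union_of_disjoint hdisj⟩
  · rintro ⟨hZ, hcard⟩
    obtain ⟨hsj, -, hdisj⟩ := Finset.card_eq_and_disjoint_of_card_union hs le_rfl hcard
    exact ⟨⟨hdisj, hZ⟩, hsj⟩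

lemma link_weightOn {σ s : Finset V} {j : ℕ} (hs : s.card ≤ j) :
    (Z.link σ).weightOn j s
      = Z.weightOn (j + σ.card) (s ∪ σ) / ((j + σ.card).choose σ.card * Z.w σ) := by
  unfold weightOn
  by_cases h : s ∈ (Z.link σ).dimFaces j
  · rw [if_pos h, if_pos ((mem_link_dimFaces hs).1 h)]
    simp only [link, (mem_filter.1 h).2]
  · rw [if_neg h, if_neg (mt (mem_link_dimFaces hs).2 h), zero_div]

variable (Z)

/-- The weighted inner product `Z.inner 1` on vertex functions becomes the standard one of `ℓ²`
after multiplying by `√w`; this makes the spectral theorem available. -/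
def toL2 : (Finset V → ℝ) →ₗ[ℝ] EuclideanSpace ℝ (Z.dimFaces 1) where
  toFun f := WithLp.toLp 2 fun σ => √(Z.w σ) * f σ
  map_add' f g := by ext σ; simp [mul_add]
  map_smul' a f := by ext σ; simp; ring

def ofL2 : EuclideanSpace ℝ (Z.dimFaces 1) →ₗ[ℝ] (Finset V → ℝ) where
  toFun x τ := if h : τ ∈ Z.dimFaces 1 then x ⟨τ, h⟩ / √(Z.w τ) else 0
  map_add' x y := by ext τ; by_cases h : τ ∈ Z.dimFaces 1 <;> simp [h, add_div]
  map_smul' a x := by ext τ; by_cases h : τ ∈ Z.dimFaces 1 <;> simp [h, mul_div_assoc]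

def nonLazyₗ (c : ℕ) : (Finset V → ℝ) →ₗ[ℝ] (Finset V → ℝ) where
  toFun := Z.nonLazy c
  map_add' f g := by ext σ; simp [nonLazy, mul_add, sum_add_distrib]
  map_smul' a f := by
    ext σ
    simp only [nonLazy, Pi.smul_apply, smul_eq_mul, RingHom.id_apply, mul_sum]
    exact sum_congr rfl fun _ _ => by ring

def walkL2 : EuclideanSpace ℝ (Z.dimFaces 1) →ₗ[ℝ] EuclideanSpace ℝ (Z.dimFaces 1) :=
  Z.toL2 ∘ₗ Z.nonLazyₗ 1 ∘ₗ Z.ofL2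

variable {Z}

lemma inner_eq_inner_toL2 (hpos : ∀ s ∈ Z.dimFaces 1, 0 < Z.w s) (f g : Finset V → ℝ) :
    Z.inner 1 f g = ⟪Z.toL2 f, Z.toL2 g⟫ := by
  rw [PiLp.inner_apply, inner, ← sum_coe_sort]
  refine Fintype.sum_congr _ _ fun σ => ?_
  have := Real.mul_self_sqrt (hpos σ σ.2).le
  simp only [toL2, LinearMap.coe_mk, AddHom.coe_mk, RCLike.inner_apply, conj_trivial]
  linear_combination (f σ * g σ) * this.symm

lemma toL2_ofL2 (hpos : ∀ s ∈ Z.dimFaces 1, 0 < Z.w s) (x : EuclideanSpace ℝ (Z.dimFaces 1)) :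
    Z.toL2 (Z.ofL2 x) = x := by
  ext σ
  have := Real.sqrt_pos.2 (hpos σ σ.2)
  simp [toL2, ofL2]
  field_simp

lemma ofL2_toL2_apply (hpos : ∀ s ∈ Z.dimFaces 1, 0 < Z.w s) (f : Finset V → ℝ)
    {τ : Finset V} (hτ : τ ∈ Z.dimFaces 1) : Z.ofL2 (Z.toL2 f) τ = f τ := by
  have := Real.sqrt_pos.2 (hpos τ hτ)
  simp [toL2, ofL2, hτ]
  field_simp

lemma toL2_surjective (hpos : ∀ s ∈ Z.dimFaces 1, 0 < Z.w s) : Function.Surjective Z.toL2 :=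
  fun x => ⟨Z.ofL2 x, toL2_ofL2 hpos x⟩

lemma walkL2_toL2 (hpos : ∀ s ∈ Z.dimFaces 1, 0 < Z.w s) (f : Finset V → ℝ) :
    Z.walkL2 (Z.toL2 f) = Z.toL2 (Z.nonLazy 1 f) :=
  congrArg Z.toL2 (Z.nonLazy_congr fun _ ht => ofL2_toL2_apply hpos f ht)

lemma isSymmetric_walkL2 (hpos : ∀ s ∈ Z.dimFaces 1, 0 < Z.w s) : Z.walkL2.IsSymmetric := by
  intro x y
  obtain ⟨f, rfl⟩ := toL2_surjective hpos x
  obtain ⟨g, rfl⟩ := toL2_surjective hpos y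
  rw [walkL2_toL2 hpos, walkL2_toL2 hpos, ← inner_eq_inner_toL2 hpos,
    Z.inner_nonLazy_one_comm hpos, inner_eq_inner_toL2 hpos, real_inner_comm]

lemma IsBalanced.inner_walkL2_toL2_one (hZ : Z.IsBalanced)
    (hpos : ∀ s ∈ Z.dimFaces 1, 0 < Z.w s) (x : EuclideanSpace ℝ (Z.dimFaces 1)) :
    ⟪Z.walkL2 x, Z.toL2 fun _ => 1⟫ = ⟪x, Z.toL2 fun _ => 1⟫ := by
  obtain ⟨f, rfl⟩ := toL2_surjective hpos x
  rw [walkL2_toL2 hpos, ← inner_eq_inner_toL2 hpos, ← inner_eq_inner_toL2 hpos,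
    hZ.inner_nonLazy_one_const hpos]

lemma isExpander_iff (hpos : ∀ s ∈ Z.dimFaces 1, 0 < Z.w s) {γ : ℝ} :
    Z.isExpander γ ↔ ∀ x, ⟪x, Z.toL2 fun _ => 1⟫ = 0 → ⟪Z.walkL2 x, x⟫ ≤ γ * ⟪x, x⟫ := by
  simp only [(toL2_surjective hpos).forall, walkL2_toL2 hpos, ← inner_eq_inner_toL2 hpos,
    isExpander, norm2]

lemma isConnected.inner_walkL2_lt (hZ : Z.isConnected) (hpos : ∀ s ∈ Z.dimFaces 1, 0 < Z.w s)
    {x : EuclideanSpace ℝ (Z.dimFaces 1)} (hx : ⟪x, Z.toL2 fun _ => 1⟫ = 0) (hx0 : x ≠ 0) :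
    ⟪Z.walkL2 x, x⟫ < ⟪x, x⟫ := by
  obtain ⟨f, rfl⟩ := toL2_surjective hpos x
  rw [← inner_eq_inner_toL2 hpos] at hx
  rw [walkL2_toL2 hpos, ← inner_eq_inner_toL2 hpos, ← inner_eq_inner_toL2 hpos]
  exact hZ f hx (by rwa [norm2, inner_eq_inner_toL2 hpos, inner_self_ne_zero])

lemma isExpander.inner_nonLazy_le {lam : ℝ} (hZ : Z.isExpander lam) (hbal : Z.IsBalanced)
    (hpos : ∀ s ∈ Z.dimFaces 1, 0 < Z.w s) (hone : Z.inner 1 (fun _ => 1) (fun _ => 1) = 1)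
    (f : Finset V → ℝ) :
    Z.inner 1 (Z.nonLazy 1 f) f
      ≤ lam * Z.norm2 1 f + (1 - lam) * Z.inner 1 f (fun _ => 1) ^ 2 := by
  rw [inner_eq_inner_toL2 hpos] at hone
  rw [norm2, inner_eq_inner_toL2 hpos, inner_eq_inner_toL2 hpos, inner_eq_inner_toL2 hpos,
    ← walkL2_toL2 hpos]
  exact (isSymmetric_walkL2 hpos).inner_map_self_le_add_inner_sq hone
    (hbal.inner_walkL2_toL2_one hpos) ((isExpander_iff hpos).1 hZ) _

lemma isConnected.isExpander_of_inner_nonLazy_le (hZ : Z.isConnected) {lam : ℝ} (h1 : lam < 1)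
    (hbal : Z.IsBalanced) (hpos : ∀ s ∈ Z.dimFaces 1, 0 < Z.w s)
    (hkey : ∀ f, Z.inner 1 (Z.nonLazy 1 f) f
      ≤ lam * Z.norm2 1 f + (1 - lam) * Z.norm2 1 (Z.nonLazy 1 f)) :
    Z.isExpander (lam / (1 - lam)) := by
  refine (isExpander_iff hpos).2 fun x hx => ?_
  refine (isSymmetric_walkL2 hpos).inner_map_self_le_div_one_sub_of_inner_eq_zero h1
    (hbal.inner_walkL2_toL2_one hpos) (fun y _ => ?_)
    (fun y hy hy0 => hZ.inner_walkL2_lt hpos hy hy0) hx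
  obtain ⟨f, rfl⟩ := toL2_surjective hpos y
  simpa only [walkL2_toL2 hpos, norm2, inner_eq_inner_toL2 hpos] using hkey f

end WFam

namespace WSC

variable {d : ℕ} (X : WSC V d)

lemma w_pos_of_mem_dimFaces {σ : Finset V} {c : ℕ} (hσ : σ ∈ X.dimFaces c) : 0 < X.w σ :=
  X.w_pos σ (mem_filter.1 hσ).1

lemma w_eq_sum_top {τ : Finset V} (hτ : τ ∈ X.faces) (hτd : τ.card ≤ d + 1) :
    X.w τ = (((d + 1).choose τ.card : ℝ))⁻¹ *
      ∑ ρ ∈ X.faces.filter (fun ρ => ρ.card = d + 1 ∧ τ ⊆ ρ), X.w ρ := by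
  rcases hτd.lt_or_eq with hlt | heq
  · exact X.w_down τ hτ (by omega)
  have htop : X.faces.filter (fun ρ => ρ.card = d + 1 ∧ τ ⊆ ρ) = {τ} := by
    ext ρ
    simp only [mem_filter, mem_singleton]
    constructor
    · rintro ⟨-, hρ, hτρ⟩
      exact (eq_of_subset_of_card_le hτρ (by omega)).symm
    · rintro rfl
      exact ⟨hτ, heq, subset_rfl⟩
  rw [htop, sum_singleton, heq, Nat.choose_self, Nat.cast_one, inv_one, one_mul]

lemma card_faces_between {τ ρ : Finset V} (hρ : ρ ∈ X.faces) (hτρ : τ ⊆ ρ) {b : ℕ}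
    (hb : τ.card ≤ b) :
    ((X.faces.filter fun σ => σ.card = b ∧ τ ⊆ σ).filter (· ⊆ ρ)).card
      = (ρ.card - τ.card).choose (b - τ.card) := by
  rw [← card_sdiff_of_subset hτρ, ← card_powersetCard]
  refine card_nbij' (· \ τ) (· ∪ τ) (fun σ hσ => ?_) (fun u hu => ?_)
    (fun σ hσ => ?_) (fun u hu => ?_)
  · simp only [mem_coe, mem_filter] at hσ
    obtain ⟨⟨-, hσb, hτσ⟩, hσρ⟩ := hσ
    simp only [mem_coe, mem_powersetCard]
    exact ⟨sdiff_subset_sdiff hσρ subset_rfl, by rw [card_sdiff_of_subset hτσ, hσb]⟩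
  · simp only [mem_coe, mem_powersetCard] at hu
    have hdisj : Disjoint u τ := disjoint_of_subset_left hu.1 sdiff_disjoint
    have huρ : u ∪ τ ⊆ ρ := union_subset (hu.1.trans sdiff_subset) hτρ
    simp only [mem_coe, mem_filter]
    refine ⟨⟨X.down_closed hρ huρ, ?_, subset_union_right⟩, huρ⟩
    rw [card_union_of_disjoint hdisj, hu.2]
    omega
  · simp only [mem_coe, mem_filter] at hσ
    exact sdiff_union_of_subset hσ.1.2.2
  · simp only [mem_coe, mem_powersetCard] at hu
    exact union_sdiff_cancel_right (disjoint_of_subset_left hu.1 sdiff_disjoint)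

/-- Write both sides as averages of top-face weights: each top face `ρ ⊇ τ` is counted
`C(d+1-|τ|, b-|τ|)` times on the left, and `C(d+1,b) C(b,|τ|) = C(d+1,|τ|) C(d+1-|τ|,b-|τ|)`. -/
lemma sum_w_superset {τ : Finset V} (hτ : τ ∈ X.faces) {b : ℕ} (hτb : τ.card ≤ b)
    (hb : b ≤ d + 1) :
    ∑ σ ∈ X.faces.filter (fun σ => σ.card = b ∧ τ ⊆ σ), X.w σ
      = (b.choose τ.card : ℝ) * X.w τ := by
  set tops := X.faces.filter fun ρ => ρ.card = d + 1 ∧ τ ⊆ ρ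
  have hσ : ∀ σ ∈ X.faces.filter (fun σ => σ.card = b ∧ τ ⊆ σ),
      X.w σ = ((d + 1).choose b : ℝ)⁻¹ * ∑ ρ ∈ tops, if σ ⊆ ρ then X.w ρ else 0 := by
    intro σ hσ
    obtain ⟨hσX, hσb, hτσ⟩ := mem_filter.1 hσ
    rw [X.w_eq_sum_top hσX (hσb ▸ hb), hσb, ← sum_filter, filter_filter]
    congr 2
    exact filter_congr fun ρ _ => ⟨fun h => ⟨⟨h.1, hτσ.trans h.2⟩, h.2⟩,
      fun h => ⟨h.1.1, h.2⟩⟩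
  have hρ : ∀ ρ ∈ tops, ∑ σ ∈ X.faces.filter (fun σ => σ.card = b ∧ τ ⊆ σ),
      (if σ ⊆ ρ then X.w ρ else 0) = ((d + 1 - τ.card).choose (b - τ.card) : ℝ) * X.w ρ := by
    intro ρ hρ
    obtain ⟨hρX, hρd, hτρ⟩ := mem_filter.1 hρ
    rw [← sum_filter, sum_const, X.card_faces_between hρX hτρ hτb, hρd, nsmul_eq_mul]
  have hchoose : ((d + 1).choose b : ℝ) * b.choose τ.card
      = (d + 1).choose τ.card * (d + 1 - τ.card).choose (b - τ.card) := by
    exact_mod_cast Nat.choose_mul hτb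
  have hb0 : ((d + 1).choose b : ℝ) ≠ 0 := by exact_mod_cast (Nat.choose_pos hb).ne'
  have hτ0 : ((d + 1).choose τ.card : ℝ) ≠ 0 := by
    exact_mod_cast (Nat.choose_pos (hτb.trans hb)).ne'
  rw [sum_congr rfl hσ, ← mul_sum, sum_comm, sum_congr rfl hρ, ← mul_sum,
    X.w_eq_sum_top hτ (hτb.trans hb)]
  field_simp
  linear_combination (∑ ρ ∈ tops, X.w ρ) * hchoose.symm

lemma mem_dimFaces_of_union_mem {τ s : Finset V} {k : ℕ} (hτ : τ.card ≤ k) (hs : s.card ≤ 1)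
    (h : τ ∪ s ∈ X.dimFaces (k + 1)) : τ ∈ X.dimFaces k ∧ Disjoint τ s := by
  obtain ⟨hX, hcard⟩ := mem_filter.1 h
  obtain ⟨hτk, -, hdisj⟩ := Finset.card_eq_and_disjoint_of_card_union hτ hs hcard
  exact ⟨mem_filter.2 ⟨X.down_closed hX subset_union_left, hτk⟩, hdisj⟩

lemma sum_weightOn_union_singleton {k : ℕ} (hk : k ≤ d) {τ : Finset V} (hτ : τ.card ≤ k) :
    ∑ s ∈ X.dimFaces 1, X.weightOn (k + 1) (τ ∪ s) = (k + 1) * X.weightOn k τ := by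
  have hunion : ∀ s ∈ X.dimFaces 1, τ ∪ s ∈ X.dimFaces (k + 1) →
      τ ∈ X.dimFaces k ∧ Disjoint τ s :=
    fun s hs => X.mem_dimFaces_of_union_mem hτ (mem_filter.1 hs).2.le
  simp only [WFam.weightOn, ← sum_filter]
  split_ifs with hτk
  · obtain ⟨hτX, hτcard⟩ := mem_filter.1 hτk
    have := X.sum_w_superset hτX (b := k + 1) (by omega) (by omega)
    rw [hτcard, Nat.choose_succ_self_right, Nat.cast_add_one] at this
    rw [← this]
    refine sum_nbij' (fun s : Finset V => τ ∪ s) (· \ τ) (fun s hs => ?_) (fun σ hσ => ?_)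
      (fun s hs => ?_) (fun σ hσ => ?_) (fun _ _ => rfl)
    · obtain ⟨hτsX, hτs⟩ := mem_filter.1 (mem_filter.1 hs).2
      exact mem_filter.2 ⟨hτsX, hτs, subset_union_left⟩
    · obtain ⟨hσX, hσk, hτσ⟩ := mem_filter.1 hσ
      refine mem_filter.2 ⟨mem_filter.2 ⟨X.down_closed hσX sdiff_subset, ?_⟩, ?_⟩
      · rw [card_sdiff_of_subset hτσ]; omega
      · rw [union_sdiff_of_subset hτσ]; exact mem_filter.2 ⟨hσX, hσk⟩
    · obtain ⟨hs, hτs⟩ := mem_filter.1 hs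
      exact union_sdiff_cancel_left (hunion s hs hτs).2
    · exact union_sdiff_of_subset (mem_filter.1 hσ).2.2
  · rw [mul_zero]
    refine sum_eq_zero fun s hs => absurd ?_ hτk
    obtain ⟨hs, hτs⟩ := mem_filter.1 hs
    exact (hunion s hs hτs).1

lemma isBalanced (hd : 1 ≤ d) : X.IsBalanced := by
  intro t ht
  simp only [union_comm _ t]
  rw [X.sum_weightOn_union_singleton hd (mem_filter.1 ht).2.le, WFam.weightOn, if_pos ht]
  norm_num

lemma link_dimFaces_subset (σ : Finset V) (j : ℕ) : (X.link σ).dimFaces j ⊆ X.dimFaces j := by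
  intro s hs
  simp only [WFam.dimFaces, WFam.link, mem_filter] at hs ⊢
  exact ⟨X.down_closed hs.1.2.2 subset_union_left, hs.2⟩

variable {X} {σ : Finset V}

lemma sum_link_vertices (hσ : σ ∈ X.dimFaces 1) (g : Finset V → ℝ) :
    ∑ s ∈ (X.link σ).dimFaces 1, (X.link σ).w s * g s
      = (2 * X.w σ)⁻¹ * ∑ s ∈ X.dimFaces 1, X.weightOn 2 (σ ∪ s) * g s := by
  rw [WFam.sum_dimFaces_eq_sum_weightOn _ (X.link_dimFaces_subset σ 1), mul_sum]
  refine sum_congr rfl fun s hs => ?_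
  rw [WFam.link_weightOn (mem_filter.1 hs).2.le, (mem_filter.1 hσ).2, union_comm]
  norm_num
  ring

lemma link_inner_const (hσ : σ ∈ X.dimFaces 1) (f : Finset V → ℝ) :
    (X.link σ).inner 1 f (fun _ => 1) = X.nonLazy 1 f σ := by
  simp only [WFam.inner, mul_one, sum_link_vertices hσ, X.nonLazy_one_apply f hσ]

lemma link_inner_const_const (hd : 1 ≤ d) (hσ : σ ∈ X.dimFaces 1) :
    (X.link σ).inner 1 (fun _ => 1) (fun _ => 1) = 1 := by
  rw [link_inner_const hσ,
    (X.isBalanced hd).nonLazy_one_const (fun _ => X.w_pos_of_mem_dimFaces) hσ]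

lemma link_w_pos (hσ : σ ∈ X.dimFaces 1) {s : Finset V} (hs : s ∈ (X.link σ).dimFaces 1) :
    0 < (X.link σ).w s := by
  have hs1 := (mem_filter.1 hs).2
  have hσ1 := (mem_filter.1 hσ).2
  have hsσ := (WFam.mem_link_dimFaces hs1.le).1 hs
  rw [hσ1] at hsσ
  have := X.w_pos_of_mem_dimFaces hσ
  have := X.w_pos_of_mem_dimFaces hsσ
  simp only [WFam.link, hs1, hσ1]
  norm_num
  positivity

lemma weightOn_three_eq_zero_of_notMem_link (hσ : σ ∈ X.dimFaces 1) {s t : Finset V}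
    (hs : s.card ≤ 1) (ht : t.card ≤ 1) (hsσ : s ∉ (X.link σ).dimFaces 1) :
    X.weightOn 3 (s ∪ t ∪ σ) = 0 := by
  have hσ1 := (mem_filter.1 hσ).2
  refine if_neg fun h => hsσ ?_
  rw [WFam.mem_link_dimFaces hs, hσ1]
  rw [union_right_comm] at h
  exact (X.mem_dimFaces_of_union_mem (k := 2) ((card_union_le s σ).trans (by omega)) ht h).1

lemma isBalanced_link (hd : 2 ≤ d) (hσ : σ ∈ X.dimFaces 1) : (X.link σ).IsBalanced := by
  intro t ht
  have ht1 := (mem_filter.1 ht).2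
  have hσ1 := (mem_filter.1 hσ).2
  have := X.w_pos_of_mem_dimFaces hσ
  calc ∑ s ∈ (X.link σ).dimFaces 1, (X.link σ).weightOn 2 (s ∪ t)
      = ∑ s ∈ (X.link σ).dimFaces 1, X.weightOn 3 (s ∪ t ∪ σ) / (3 * X.w σ) := by
        refine sum_congr rfl fun s hs => ?_
        rw [WFam.link_weightOn ((card_union_le s t).trans
          (by rw [(mem_filter.1 hs).2, ht1])), hσ1]
        norm_num
    _ = ∑ s ∈ X.dimFaces 1, X.weightOn 3 (s ∪ t ∪ σ) / (3 * X.w σ) :=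
        sum_subset (X.link_dimFaces_subset σ 1) fun s hs hsσ => by
          rw [weightOn_three_eq_zero_of_notMem_link hσ (mem_filter.1 hs).2.le ht1.le hsσ,
            zero_div]
    _ = 3 * X.weightOn 2 (t ∪ σ) / (3 * X.w σ) := by
        simp only [union_comm _ t, union_right_comm t]
        rw [← sum_div, X.sum_weightOn_union_singleton (k := 2) hd
          ((card_union_le t σ).trans (by omega))]
        norm_num
    _ = 2 * (X.link σ).w t := by
        have hY : (X.link σ).weightOn 1 t = (X.link σ).w t := if_pos ht
        rw [← hY, WFam.link_weightOn ht1.le, hσ1]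
        field_simp
        norm_num

lemma sum_w_mul_link_inner (hd : 1 ≤ d) (f g : Finset V → ℝ) :
    ∑ σ ∈ X.dimFaces 1, X.w σ * (X.link σ).inner 1 f g = X.inner 1 f g := by
  have hlocal : ∀ σ ∈ X.dimFaces 1, X.w σ * (X.link σ).inner 1 f g
      = ∑ s ∈ X.dimFaces 1, X.weightOn 2 (σ ∪ s) / 2 * (f s * g s) := fun σ hσ => by
    have := X.w_pos_of_mem_dimFaces hσ
    rw [WFam.inner, sum_link_vertices hσ, mul_sum, mul_sum]
    exact sum_congr rfl fun s _ => by field_simp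
  rw [sum_congr rfl hlocal, sum_comm]
  refine sum_congr rfl fun s hs => ?_
  rw [← sum_mul, ← sum_div, X.isBalanced hd s hs]
  ring

lemma w_mul_link_inner_nonLazy (hσ : σ ∈ X.dimFaces 1) (f g : Finset V → ℝ) :
    X.w σ * (X.link σ).inner 1 ((X.link σ).nonLazy 1 f) g
      = ∑ s ∈ X.dimFaces 1, ∑ t ∈ X.dimFaces 1,
          X.weightOn 3 (s ∪ t ∪ σ) / 6 * (f t * g s) := by
  have hσ1 := (mem_filter.1 hσ).2
  have := X.w_pos_of_mem_dimFaces hσ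
  have hcard : ∀ s ∈ X.dimFaces 1, s.card ≤ 1 := fun s hs => (mem_filter.1 hs).2.le
  have hsub := X.link_dimFaces_subset σ 1
  calc _ = ∑ s ∈ (X.link σ).dimFaces 1, ∑ t ∈ (X.link σ).dimFaces 1,
        X.weightOn 3 (s ∪ t ∪ σ) / 6 * (f t * g s) := by
        rw [(X.link σ).inner_nonLazy_one_eq_sum (fun _ => link_w_pos hσ), mul_sum]
        refine sum_congr rfl fun s hs => ?_
        rw [mul_sum]
        refine sum_congr rfl fun t ht => ?_
        rw [WFam.link_weightOn ((card_union_le s t).trans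
          (by linarith [hcard s (hsub hs), hcard t (hsub ht)])), hσ1, Nat.choose_one_right]
        push_cast
        field_simp
        ring
    _ = ∑ s ∈ (X.link σ).dimFaces 1, ∑ t ∈ X.dimFaces 1,
        X.weightOn 3 (s ∪ t ∪ σ) / 6 * (f t * g s) :=
        sum_congr rfl fun s hs => sum_subset hsub fun t ht htσ => by
          rw [union_comm s, weightOn_three_eq_zero_of_notMem_link hσ (hcard t ht)
            (hcard s (hsub hs)) htσ, zero_div, zero_mul]
    _ = _ := sum_subset hsub fun s hs hsσ => sum_eq_zero fun t ht => by
          rw [weightOn_three_eq_zero_of_notMem_link hσ (hcard s hs) (hcard t ht) hsσ,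
            zero_div, zero_mul]

lemma sum_w_mul_link_inner_nonLazy (hd : 2 ≤ d) (f g : Finset V → ℝ) :
    ∑ σ ∈ X.dimFaces 1, X.w σ * (X.link σ).inner 1 ((X.link σ).nonLazy 1 f) g
      = X.inner 1 (X.nonLazy 1 f) g := by
  rw [sum_congr rfl fun σ hσ => w_mul_link_inner_nonLazy hσ f g,
    X.inner_nonLazy_one_eq_sum (fun _ => X.w_pos_of_mem_dimFaces), sum_comm]
  refine sum_congr rfl fun s hs => ?_
  rw [sum_comm]
  refine sum_congr rfl fun t ht => ?_
  rw [← sum_mul, ← sum_div, X.sum_weightOn_union_singleton (k := 2) hd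
    ((card_union_le s t).trans (by rw [(mem_filter.1 hs).2, (mem_filter.1 ht).2]))]
  ring

variable (X)

lemma inner_nonLazy_le (hd : 2 ≤ d) {lam : ℝ}
    (hlink : ∀ v ∈ X.dimFaces 1, (X.link v).isExpander lam) (f : Finset V → ℝ) :
    X.inner 1 (X.nonLazy 1 f) f
      ≤ lam * X.norm2 1 f + (1 - lam) * X.norm2 1 (X.nonLazy 1 f) := by
  have hlocal : ∀ σ ∈ X.dimFaces 1, X.w σ * (X.link σ).inner 1 ((X.link σ).nonLazy 1 f) f
      ≤ X.w σ * (lam * (X.link σ).norm2 1 f + (1 - lam) * X.nonLazy 1 f σ ^ 2) := by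
    intro σ hσ
    rw [← link_inner_const hσ]
    exact mul_le_mul_of_nonneg_left ((hlink σ hσ).inner_nonLazy_le (isBalanced_link hd hσ)
      (fun _ => link_w_pos hσ) (link_inner_const_const (by omega) hσ) f)
      (X.w_pos_of_mem_dimFaces hσ).le
  calc X.inner 1 (X.nonLazy 1 f) f
      = ∑ σ ∈ X.dimFaces 1, X.w σ * (X.link σ).inner 1 ((X.link σ).nonLazy 1 f) f :=
        (sum_w_mul_link_inner_nonLazy hd f f).symm
    _ ≤ ∑ σ ∈ X.dimFaces 1,
          X.w σ * (lam * (X.link σ).norm2 1 f + (1 - lam) * X.nonLazy 1 f σ ^ 2) :=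
        sum_le_sum hlocal
    _ = lam * ∑ σ ∈ X.dimFaces 1, X.w σ * (X.link σ).inner 1 f f
        + (1 - lam) * ∑ σ ∈ X.dimFaces 1, X.w σ * (X.nonLazy 1 f σ * X.nonLazy 1 f σ) := by
        rw [mul_sum, mul_sum, ← sum_add_distrib]
        exact sum_congr rfl fun σ _ => by rw [WFam.norm2]; ring
    _ = lam * X.norm2 1 f + (1 - lam) * X.norm2 1 (X.nonLazy 1 f) := by
        rw [sum_w_mul_link_inner (by omega)]
        rfl

end WSC

variable {d : ℕ}

theorem trickling_down_general (X : WSC V d) (hd : 2 ≤ d) (lam : ℝ)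
    (h1 : lam < 1)
    (hlink : ∀ v ∈ X.toWFam.dimFaces 1, (X.toWFam.link v).isExpander lam)
    (hconn : X.toWFam.isConnected) :
    X.toWFam.isExpander (lam / (1 - lam)) :=
  hconn.isExpander_of_inner_nonLazy_le h1 (X.isBalanced (by omega))
    (fun _ => X.w_pos_of_mem_dimFaces) (X.inner_nonLazy_le hd hlink)

/-- Trickling Down Theorem. If `(X, w)` is a weighted pure
`d`-dimensional simplicial complex with `d ≥ 2` such that the 1-skeleton of
the link of every vertex is a `λ`-spectral expander (`0 ≤ λ < 1`) and the
1-skeleton of `X` is connected, then the 1-skeleton of `X` is a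
`(λ/(1-λ))`-spectral expander. -/
theorem trickling_down (X : WSC V d) (hd : 2 ≤ d) (lam : ℝ) (h0 : 0 ≤ lam)
    (h1 : lam < 1)
    (hlink : ∀ v ∈ X.toWFam.dimFaces 1, (X.toWFam.link v).isExpander lam)
    (hconn : X.toWFam.isConnected) :
    X.toWFam.isExpander (lam / (1 - lam)) :=
  trickling_down_general X hd lam h1 hlink hconn

end

end HDRW
end

section
/- Let (X, w) be a weighted pure d-dimensional simplicial complex, let 0 ≤ k ≤ d and −1 ≤ i ≤ k−1, and let f ∈ C^k(X; ℝ). Then ⟨f_σ, 1⟩_{X_σ} = 0 for every σ ∈ X(i) if and only if d_i^* ⋯ d_{k−1}^* f = 0. In particular (the case i = −1): ⟨f, 1⟩ = 0 if and only if d_{−1}^* ⋯ d_{k−1}^* f = 0. -/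
/-!
Weighted pure simplicial complexes, links, cochains, signless differentials
and high dimensional random walk operators.

Conventions: faces are `Finset`s of vertices. A cochain "of dimension `k`"
(an element of `C^k(X;ℝ)`) is represented by a function `Finset V → ℝ`
evaluated on faces of **cardinality** `c = k + 1`; all operators are indexed
by cardinality.
-/

open Finset

namespace HDRW

noncomputable section

variable {V : Type*} [DecidableEq V] [Fintype V]

variable {d : ℕ}

private lemma between_eq_image (X : WSC V d) {σ τ : Finset V} (hτ : τ ∈ X.faces)
    (hστ : σ ⊆ τ) :
    (X.faces.filter (fun ρ => ρ.card = σ.card + 1)).filter (fun ρ => σ ⊆ ρ ∧ ρ ⊆ τ)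
      = (τ \ σ).image (fun v => insert v σ) := by
  ext ρ
  simp only [Finset.mem_filter, Finset.mem_image, Finset.mem_sdiff]
  constructor
  · rintro ⟨⟨hρf, hρc⟩, hσρ, hρτ⟩
    have h1 : (ρ \ σ).card = 1 := by
      rw [Finset.card_sdiff_of_subset hσρ, hρc]; omega
    obtain ⟨v, hv⟩ := Finset.card_eq_one.mp h1
    have hvm : v ∈ ρ \ σ := by rw [hv]; exact Finset.mem_singleton_self v
    rw [Finset.mem_sdiff] at hvm
    refine ⟨v, ⟨hρτ hvm.1, hvm.2⟩, ?_⟩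
    have hsub : insert v σ ⊆ ρ := Finset.insert_subset hvm.1 hσρ
    refine Finset.eq_of_subset_of_card_le hsub ?_
    rw [hρc, Finset.card_insert_of_notMem hvm.2]
  · rintro ⟨v, ⟨hvτ, hvσ⟩, rfl⟩
    have hsub : insert v σ ⊆ τ := Finset.insert_subset hvτ hστ
    exact ⟨⟨X.down_closed hτ hsub, Finset.card_insert_of_notMem hvσ⟩,
      Finset.subset_insert _ _, hsub⟩

private lemma card_between (X : WSC V d) {σ τ : Finset V} (hτ : τ ∈ X.faces)
    (hστ : σ ⊆ τ) :
    ((X.faces.filter (fun ρ => ρ.card = σ.card + 1)).filter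
        (fun ρ => σ ⊆ ρ ∧ ρ ⊆ τ)).card = τ.card - σ.card := by
  rw [between_eq_image X hτ hστ, Finset.card_image_of_injOn, Finset.card_sdiff_of_subset hστ]
  intro u hu v hv huv
  rw [Finset.mem_coe, Finset.mem_sdiff] at hu hv
  have huv' : insert u σ = insert v σ := huv
  have : u ∈ insert v σ := huv' ▸ Finset.mem_insert_self u σ
  rcases Finset.mem_insert.mp this with h' | h'
  · exact h'
  · exact absurd h' hu.2

private lemma sAdjIter_eq (X : WSC V d) (f : Finset V → ℝ) :
    ∀ (n a : ℕ) (σ : Finset V), σ ∈ X.faces → σ.card = a →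
    X.toWFam.sAdjIter a n f σ = (((a + n).choose a : ℝ))⁻¹ * (X.w σ)⁻¹ *
      ∑ τ ∈ X.faces.filter (fun τ => τ.card = a + n ∧ σ ⊆ τ), X.w τ * f τ := by
  intro n
  induction n with
  | zero =>
    intro a σ hσf hσc
    have hwσ : X.w σ ≠ 0 := (X.w_pos σ hσf).ne'
    have hfilt : X.faces.filter (fun τ => τ.card = a + 0 ∧ σ ⊆ τ) = {σ} := by
      ext τ
      simp only [Finset.mem_filter, Finset.mem_singleton]
      constructor
      · rintro ⟨hτf, hτc, hστ⟩
        exact (Finset.eq_of_subset_of_card_le hστ (by omega)).symm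
      · rintro rfl
        exact ⟨hσf, by omega, Finset.Subset.refl _⟩
    rw [hfilt, Finset.sum_singleton]
    simp only [Nat.add_zero, Nat.choose_self, Nat.cast_one, inv_one, one_mul]
    show f σ = (X.w σ)⁻¹ * (X.w σ * f σ)
    field_simp
  | succ n ih =>
    intro a σ hσf hσc
    have hwσ : X.w σ ≠ 0 := (X.w_pos σ hσf).ne'
    show X.toWFam.sAdj a (X.toWFam.sAdjIter (a + 1) n f) σ = _
    rw [WFam.sAdj]
    have hterm : ∀ ρ ∈ (X.toWFam.dimFaces (a + 1)).filter (fun ρ => σ ⊆ ρ),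
        (X.toWFam.link σ).w (ρ \ σ) * X.toWFam.sAdjIter (a + 1) n f ρ
          = (((a : ℝ) + 1)⁻¹ * (X.w σ)⁻¹ * (((a + 1 + n).choose (a + 1) : ℝ))⁻¹) *
            ∑ τ ∈ X.faces.filter (fun τ => τ.card = a + 1 + n ∧ ρ ⊆ τ), X.w τ * f τ := by
      intro ρ hρ
      rw [Finset.mem_filter] at hρ
      obtain ⟨hρ1, hσρ⟩ := hρ
      rw [WFam.dimFaces, Finset.mem_filter] at hρ1
      obtain ⟨hρf, hρc⟩ := hρ1
      have hwρ : X.w ρ ≠ 0 := (X.w_pos ρ hρf).ne'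
      rw [ih (a + 1) ρ hρf hρc]
      have hsd : ρ \ σ ∪ σ = ρ := Finset.sdiff_union_of_subset hσρ
      have hsc : (ρ \ σ).card = 1 := by rw [Finset.card_sdiff_of_subset hσρ, hρc, hσc]; omega
      show X.w (ρ \ σ ∪ σ) / ((((ρ \ σ).card + σ.card).choose σ.card : ℝ) * X.w σ) * _ = _
      rw [hsd, hsc, hσc]
      have hch : (1 + a).choose a = a + 1 := by
        rw [Nat.add_comm]; exact Nat.choose_succ_self_right a
      rw [hch]
      have h1 : ((a : ℝ) + 1) ≠ 0 := by positivity
      have h2 : (((a + 1 + n).choose (a + 1) : ℝ)) ≠ 0 :=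
        Nat.cast_ne_zero.mpr (Nat.choose_pos (by omega)).ne'
      push_cast
      field_simp
    rw [Finset.sum_congr rfl hterm, ← Finset.mul_sum]
    have hswap : ∑ ρ ∈ (X.toWFam.dimFaces (a + 1)).filter (fun ρ => σ ⊆ ρ),
          ∑ τ ∈ X.faces.filter (fun τ => τ.card = a + 1 + n ∧ ρ ⊆ τ), X.w τ * f τ
        = ((n : ℝ) + 1) *
          ∑ τ ∈ X.faces.filter (fun τ => τ.card = a + (n + 1) ∧ σ ⊆ τ), X.w τ * f τ := by
      rw [Finset.sum_comm'
        (t' := X.faces.filter (fun τ => τ.card = a + (n + 1) ∧ σ ⊆ τ))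
        (s' := fun τ => (X.faces.filter (fun ρ => ρ.card = σ.card + 1)).filter
          (fun ρ => σ ⊆ ρ ∧ ρ ⊆ τ))
        (h := by
          intro ρ τ
          simp only [WFam.dimFaces, Finset.mem_filter]
          constructor
          · rintro ⟨⟨⟨hρf, hρc⟩, hσρ⟩, hτf, hτc, hρτ⟩
            exact ⟨⟨⟨hρf, by omega⟩, hσρ, hρτ⟩, hτf, by omega, hσρ.trans hρτ⟩
          · rintro ⟨⟨⟨hρf, hρc⟩, hσρ, hρτ⟩, hτf, hτc, hστ⟩
            exact ⟨⟨⟨hρf, by omega⟩, hσρ⟩, hτf, by omega, hρτ⟩)]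
      rw [Finset.mul_sum]
      refine Finset.sum_congr rfl fun τ hτ => ?_
      rw [Finset.mem_filter] at hτ
      obtain ⟨hτf, hτc, hστ⟩ := hτ
      rw [Finset.sum_const, card_between X hτf hστ, nsmul_eq_mul]
      have hc : τ.card - σ.card = n + 1 := by omega
      rw [hc]
      push_cast
      ring
    rw [hswap]
    have hcast : (((a : ℝ) + 1)⁻¹ * (((a + 1 + n).choose (a + 1) : ℝ))⁻¹) * ((n : ℝ) + 1)
        = (((a + (n + 1)).choose a : ℝ))⁻¹ := by
      have hid : ((a + n + 1).choose (a + 1)) * (a + 1) = (a + n + 1).choose a * (n + 1) := by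
        have h := Nat.choose_succ_right_eq (a + n + 1) a
        rw [show a + n + 1 - a = n + 1 by omega] at h
        exact h
      have h1 : ((a + 1 + n).choose (a + 1) : ℝ) ≠ 0 := by
        exact_mod_cast Nat.cast_ne_zero.mpr (Nat.choose_pos (by omega)).ne'
      have h2 : (((a + (n + 1)).choose a : ℝ)) ≠ 0 := by
        exact_mod_cast Nat.cast_ne_zero.mpr (Nat.choose_pos (by omega)).ne'
      have h3 : ((a : ℝ) + 1) ≠ 0 := by positivity
      have h4 : ((n : ℝ) + 1) ≠ 0 := by positivity
      have e1 : a + 1 + n = a + n + 1 := by omega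
      have e2 : a + (n + 1) = a + n + 1 := by omega
      simp only [e1, e2] at h1 h2 ⊢
      have hidR : ((a + n + 1).choose (a + 1) : ℝ) * ((a : ℝ) + 1)
          = ((a + n + 1).choose a : ℝ) * ((n : ℝ) + 1) := by
        exact_mod_cast congrArg (fun x : ℕ => (x : ℝ)) hid
      field_simp
      linear_combination (-1 : ℝ) * hidR
    rw [← hcast]
    ring

private lemma link_inner_eq (X : WSC V d) (f : Finset V → ℝ) {σ : Finset V}
    (hσf : σ ∈ X.faces) {a n : ℕ} (hσc : σ.card = a) :
    (X.toWFam.link σ).inner n (fun s => f (σ ∪ s)) (fun _ => 1)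
      = (((a + n).choose a : ℝ))⁻¹ * (X.w σ)⁻¹ *
        ∑ τ ∈ X.faces.filter (fun τ => τ.card = a + n ∧ σ ⊆ τ), X.w τ * f τ := by
  rw [WFam.inner, Finset.mul_sum]
  refine Finset.sum_nbij' (fun s => s ∪ σ) (fun τ => τ \ σ) ?_ ?_ ?_ ?_ ?_
  · intro s hs
    simp only [WFam.dimFaces, WFam.link, Finset.mem_filter, Finset.mem_powerset] at hs ⊢
    obtain ⟨⟨_, hdisj, hmem⟩, hcard⟩ := hs
    exact ⟨hmem, by rw [Finset.card_union_of_disjoint hdisj]; omega, Finset.subset_union_right⟩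
  · intro τ hτ
    simp only [WFam.dimFaces, WFam.link, Finset.mem_filter, Finset.mem_powerset] at hτ ⊢
    obtain ⟨hτf, hτc, hστ⟩ := hτ
    refine ⟨⟨Finset.subset_univ _, Finset.sdiff_disjoint, ?_⟩, ?_⟩
    · rw [Finset.sdiff_union_of_subset hστ]; exact hτf
    · rw [Finset.card_sdiff_of_subset hστ]; omega
  · intro s hs
    simp only [WFam.dimFaces, WFam.link, Finset.mem_filter, Finset.mem_powerset] at hs
    exact Finset.union_sdiff_cancel_right hs.1.2.1
  · intro τ hτ
    simp only [WFam.dimFaces, Finset.mem_filter] at hτ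
    exact Finset.sdiff_union_of_subset hτ.2.2
  · intro s hs
    simp only [WFam.dimFaces, WFam.link, Finset.mem_filter, Finset.mem_powerset] at hs
    obtain ⟨⟨_, hdisj, hmem⟩, hcard⟩ := hs
    show X.w (s ∪ σ) / (((s.card + σ.card).choose σ.card : ℝ) * X.w σ) * (f (σ ∪ s) * 1)
      = _
    rw [hcard, hσc, Finset.union_comm σ s, Nat.add_comm n a]
    rw [div_eq_mul_inv, mul_inv]
    ring


/-- For `0 ≤ k ≤ d`, `-1 ≤ i ≤ k - 1` (here `a = i + 1`,
`n = k - i ≥ 1`, so `a + n = k + 1 ≤ d + 1`) and `f ∈ C^k(X;ℝ)`: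
`⟨f_σ, 1⟩_{X_σ} = 0` for every `σ ∈ X(i)` if and only if
`d_i^* ⋯ d_{k-1}^* f = 0` (as a cochain on `X(i)`). The case `a = 0`
(`i = -1`) says: `⟨f, 1⟩ = 0` iff `d_{-1}^* ⋯ d_{k-1}^* f = 0`. -/
theorem level_iff_sAdjIter_zero (X : WSC V d) (a n : ℕ) (hn : 1 ≤ n)
    (h : a + n ≤ d + 1) (f : Finset V → ℝ) :
    (∀ σ ∈ X.toWFam.dimFaces a,
        (X.toWFam.link σ).inner n (fun s => f (σ ∪ s)) (fun _ => 1) = 0) ↔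
    (∀ σ ∈ X.toWFam.dimFaces a, X.toWFam.sAdjIter a n f σ = 0) := by
  have key : ∀ σ ∈ X.toWFam.dimFaces a,
      (X.toWFam.link σ).inner n (fun s => f (σ ∪ s)) (fun _ => 1)
        = X.toWFam.sAdjIter a n f σ := by
    intro σ hσ
    rw [WFam.dimFaces, Finset.mem_filter] at hσ
    rw [link_inner_eq X f hσ.1 hσ.2, sAdjIter_eq X f n a σ hσ.1 hσ.2]
  constructor
  · intro H σ hσ
    rw [← key σ hσ]; exact H σ hσ
  · intro H σ hσ
    rw [key σ hσ]; exact H σ hσ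

end

end HDRW
end

section
/- Let (X, w) be a weighted pure d-dimensional simplicial complex, 1 ≤ k ≤ d, and let f ∈ C^k(X; ℝ) be a proper 0-level cochain, i.e. f ∈ im(d_{k−1} ⋯ d_0) and d_{−1}^* ⋯ d_{k−1}^* f = 0. Then there exists a 0-cochain g ∈ C^0(X; ℝ) such that: (1) ⟨g, 1⟩ = 0 (equivalently d_{−1}^* g = 0); (2) ‖g‖² = ‖f‖²; and (3) ‖d_0^* ⋯ d_{k−1}^* f‖² = ‖d_{k−1} ⋯ d_0 g‖². -/
/-!
Weighted pure simplicial complexes, links, cochains, signless differentials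
and high dimensional random walk operators.

Conventions: faces are `Finset`s of vertices. A cochain "of dimension `k`"
(an element of `C^k(X;ℝ)`) is represented by a function `Finset V → ℝ`
evaluated on faces of **cardinality** `c = k + 1`; all operators are indexed
by cardinality.
-/

open Finset

namespace HDRW

noncomputable section

variable {V : Type*} [DecidableEq V] [Fintype V]

variable {d : ℕ}

/-!
Write `f = D h` with `D = d_{k-1} ⋯ d_0` and put `u = D^* f`. Then `⟨h, u⟩ = ‖D h‖² = ‖f‖²`, and
Cauchy–Schwarz applied to `⟨h, u⟩` and to `⟨D u, f⟩ = ‖u‖²` gives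
`‖D h‖² / ‖h‖² ≤ ‖u‖² / ‖f‖² ≤ ‖D u‖² / ‖u‖²`. By the intermediate value theorem some
combination `g` of `h` and `u` has Rayleigh quotient `‖D g‖² / ‖g‖² = ‖u‖² / ‖f‖²`, and
rescaling makes `‖g‖² = ‖f‖²`. Both `h` and `u` are orthogonal to `1`: `D` and `D^*` preserve
`⟨·, 1⟩` (for `D^*` this is the averaging recurrence of the weights), and
`⟨f, 1⟩ = w(∅) · (d_{-1}^* ⋯ d_{k-1}^* f)(∅) = 0`.
-/

namespace WFam

variable (Y : WFam V) (c : ℕ)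

theorem mem_dimFaces {σ : Finset V} : σ ∈ Y.dimFaces c ↔ σ ∈ Y.faces ∧ σ.card = c :=
  mem_filter

theorem inner_comm (F G : Finset V → ℝ) : Y.inner c F G = Y.inner c G F :=
  sum_congr rfl fun _ _ => by ring

theorem inner_linearCombination_left (a b : ℝ) (F G K : Finset V → ℝ) :
    Y.inner c (fun σ => a * F σ + b * G σ) K = a * Y.inner c F K + b * Y.inner c G K := by
  simp only [inner, mul_sum, ← sum_add_distrib]
  exact sum_congr rfl fun _ _ => by ring

theorem norm2_linearCombination (a b : ℝ) (F G : Finset V → ℝ) :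
    Y.norm2 c (fun σ => a * F σ + b * G σ)
      = a ^ 2 * Y.norm2 c F + 2 * a * b * Y.inner c F G + b ^ 2 * Y.norm2 c G := by
  simp only [norm2, inner, mul_sum, ← sum_add_distrib]
  exact sum_congr rfl fun _ _ => by ring

variable {Y c}

theorem inner_congr {F F' G G' : Finset V → ℝ}
    (hF : ∀ σ ∈ Y.dimFaces c, F σ = F' σ) (hG : ∀ σ ∈ Y.dimFaces c, G σ = G' σ) :
    Y.inner c F G = Y.inner c F' G' :=
  sum_congr rfl fun σ hσ => by rw [hF σ hσ, hG σ hσ]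

theorem norm2_nonneg (hw : ∀ σ ∈ Y.dimFaces c, 0 ≤ Y.w σ) (F : Finset V → ℝ) :
    0 ≤ Y.norm2 c F :=
  sum_nonneg fun σ hσ => mul_nonneg (hw σ hσ) (mul_self_nonneg _)

theorem inner_sq_le_norm2_mul_norm2 (hw : ∀ σ ∈ Y.dimFaces c, 0 ≤ Y.w σ)
    (F G : Finset V → ℝ) : Y.inner c F G ^ 2 ≤ Y.norm2 c F * Y.norm2 c G :=
  sum_sq_le_sum_mul_sum_of_sq_le_mul _ (fun σ hσ => mul_nonneg (hw σ hσ) (mul_self_nonneg _))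
    (fun σ hσ => mul_nonneg (hw σ hσ) (mul_self_nonneg _)) fun _ _ => le_of_eq (by ring)

theorem link_w_sdiff {τ σ : Finset V} (h : τ ⊆ σ) :
    (Y.link τ).w (σ \ τ) = Y.w σ / ((σ.card.choose τ.card : ℝ) * Y.w τ) := by
  simp only [link]
  rw [card_sdiff_of_subset h, Nat.sub_add_cancel (card_le_card h), sdiff_union_of_subset h]

theorem sAdjIter_succ (n a : ℕ) (F : Finset V → ℝ) :
    Y.sAdjIter a (n + 1) F = Y.sAdjIter a n (Y.sAdj (a + n) F) := by
  induction n generalizing a with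
  | zero => rfl
  | succ n ih =>
    rw [sAdjIter, ih, sAdjIter, add_right_comm, add_assoc]

end WFam

theorem sDiffIter_linearCombination {V : Type*} (a n : ℕ) (r s : ℝ) (F G : Finset V → ℝ) :
    sDiffIter a n (fun τ => r * F τ + s * G τ)
      = fun σ => r * sDiffIter a n F σ + s * sDiffIter a n G σ := by
  induction n with
  | zero => rfl
  | succ n ih =>
    funext σ
    simp only [sDiffIter, sDiff, ih, sum_add_distrib, ← mul_sum]
    ring

theorem sDiffIter_one {V : Type*} (a n : ℕ) {σ : Finset V} (hσ : σ.card = a + n) :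
    sDiffIter a n (fun _ => 1) σ = 1 := by
  induction n generalizing σ with
  | zero => rfl
  | succ n ih =>
    have hone : ∀ τ ∈ σ.powerset.filter (·.card = a + n), sDiffIter a n (fun _ => 1) τ = 1 :=
      fun τ hτ => ih (mem_filter.1 hτ).2
    rw [sDiffIter, sDiff, sum_congr rfl hone, sum_const, ← powersetCard_eq_filter,
      card_powersetCard, hσ, ← add_assoc, Nat.choose_succ_self_right, nsmul_one]
    push_cast
    field_simp

namespace WSC

variable (X : WSC V d)

theorem w_nonneg {c : ℕ} : ∀ σ ∈ X.dimFaces c, 0 ≤ X.w σ :=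
  fun σ hσ => (X.w_pos σ (X.mem_dimFaces c |>.1 hσ).1).le

theorem inner_zero_eq_w_empty (F G : Finset V → ℝ) : X.inner 0 F G = X.w ∅ * (F ∅ * G ∅) := by
  have : X.dimFaces 0 = {∅} := by
    ext σ
    simp only [WFam.mem_dimFaces, card_eq_zero, mem_singleton]
    exact ⟨And.right, fun h => ⟨h ▸ X.empty_mem, h⟩⟩
  rw [WFam.inner, this, sum_singleton]

theorem powerset_filter_card_eq {σ : Finset V} (hσ : σ ∈ X.faces) (c : ℕ) :
    σ.powerset.filter (·.card = c) = (X.dimFaces c).filter (· ⊆ σ) := by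
  ext τ
  simp only [mem_filter, mem_powerset, WFam.mem_dimFaces]
  exact ⟨fun ⟨hτσ, hτ⟩ => ⟨⟨X.down_closed hσ hτσ, hτ⟩, hτσ⟩, fun ⟨⟨_, hτ⟩, hτσ⟩ => ⟨hτσ, hτ⟩⟩

theorem link_w_sdiff_of_card_eq {τ σ : Finset V} (hτ : τ ∈ X.faces) (hτσ : τ ⊆ σ) {c : ℕ}
    (hτc : τ.card = c) (hσc : σ.card = c + 1) :
    (X.link τ).w (σ \ τ) = ((c : ℝ) + 1)⁻¹ * X.w σ / X.w τ := by
  have := (X.w_pos τ hτ).ne'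
  rw [WFam.link_w_sdiff hτσ, hτc, hσc, Nat.choose_succ_self_right]
  push_cast
  field_simp

theorem inner_sDiff_eq_inner_sAdj (c : ℕ) (F G : Finset V → ℝ) :
    X.inner (c + 1) (sDiff c F) G = X.inner c F (X.sAdj c G) := by
  -- Both sides are the sum of `(c + 1)⁻¹ * w σ * F τ * G σ` over the pairs `τ ⊆ σ`.
  have lhs : ∀ σ ∈ X.dimFaces (c + 1), X.w σ * (sDiff c F σ * G σ) =
      ∑ τ ∈ X.dimFaces c, if τ ⊆ σ then ((c : ℝ) + 1)⁻¹ * X.w σ * F τ * G σ else 0 := by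
    intro σ hσ
    rw [← sum_filter, ← X.powerset_filter_card_eq ((X.mem_dimFaces _).1 hσ).1, sDiff, mul_sum,
      sum_mul, mul_sum]
    exact sum_congr rfl fun _ _ => by ring
  have rhs : ∀ τ ∈ X.dimFaces c, X.w τ * (F τ * X.sAdj c G τ) =
      ∑ σ ∈ X.dimFaces (c + 1), if τ ⊆ σ then ((c : ℝ) + 1)⁻¹ * X.w σ * F τ * G σ else 0 := by
    intro τ hτ
    obtain ⟨hτf, hτc⟩ := (X.mem_dimFaces _).1 hτ
    have := (X.w_pos τ hτf).ne'
    rw [← sum_filter, WFam.sAdj, mul_sum, mul_sum]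
    refine sum_congr rfl fun σ hσ => ?_
    obtain ⟨hσ, hτσ⟩ := mem_filter.1 hσ
    rw [X.link_w_sdiff_of_card_eq hτf hτσ hτc ((X.mem_dimFaces _).1 hσ).2]
    field_simp
  simp only [WFam.inner, sum_congr rfl lhs, sum_congr rfl rhs]
  exact sum_comm

theorem inner_sDiffIter_eq_inner_sAdjIter (a n : ℕ) (F G : Finset V → ℝ) :
    X.inner (a + n) (sDiffIter a n F) G = X.inner a F (X.sAdjIter a n G) := by
  induction n generalizing G with
  | zero => rfl
  | succ n ih =>
    rw [WFam.sAdjIter_succ, ← ih, ← inner_sDiff_eq_inner_sAdj]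
    rfl

theorem w_eq_choose_inv_mul_sum_top {σ : Finset V} (hσ : σ ∈ X.faces) (hc : σ.card ≤ d + 1) :
    X.w σ = (((d + 1).choose σ.card : ℝ))⁻¹ *
      ∑ T ∈ X.faces.filter (fun T => T.card = d + 1 ∧ σ ⊆ T), X.w T := by
  rcases hc.lt_or_eq with hlt | hcard
  · exact X.w_down σ hσ (by omega)
  · have : X.faces.filter (fun T => T.card = d + 1 ∧ σ ⊆ T) = {σ} := by
      ext T
      simp only [mem_filter, mem_singleton]
      refine ⟨fun ⟨_, hT, hσT⟩ => (eq_of_subset_of_card_le hσT (by omega)).symm, ?_⟩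
      rintro rfl
      exact ⟨hσ, hcard, subset_rfl⟩
    rw [this, sum_singleton, hcard, Nat.choose_self, Nat.cast_one, inv_one, one_mul]

theorem card_filter_dimFaces_between {τ T : Finset V} (hT : T ∈ X.faces) (hτT : τ ⊆ T) {c : ℕ}
    (hτc : τ.card = c) :
    ((X.dimFaces (c + 1)).filter fun σ => τ ⊆ σ ∧ σ ⊆ T).card = (T \ τ).card := by
  rw [← Nat.choose_one_right (T \ τ).card, ← card_powersetCard]
  refine card_nbij' (· \ τ) (· ∪ τ) ?_ ?_ ?_ ?_
  · intro σ hσ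
    obtain ⟨hσ, hτσ, hσT⟩ := mem_filter.1 hσ
    rw [mem_coe, mem_powersetCard, card_sdiff_of_subset hτσ, ((X.mem_dimFaces _).1 hσ).2, hτc]
    exact ⟨sdiff_subset_sdiff hσT subset_rfl, by omega⟩
  · intro s hs
    rw [mem_coe, mem_powersetCard] at hs
    have hsτ : Disjoint s τ := disjoint_of_subset_left hs.1 sdiff_disjoint
    have hsT : s ∪ τ ⊆ T := union_subset (hs.1.trans sdiff_subset) hτT
    rw [mem_coe, mem_filter, WFam.mem_dimFaces, card_union_of_disjoint hsτ, hs.2, hτc, add_comm]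
    exact ⟨⟨X.down_closed hT hsT, rfl⟩, subset_union_right, hsT⟩
  · intro σ hσ
    exact sdiff_union_of_subset (mem_filter.1 hσ).2.1
  · intro s hs
    exact union_sdiff_cancel_right
      (disjoint_of_subset_left (mem_powersetCard.1 hs).1 sdiff_disjoint)

theorem sum_w_filter_dimFaces_superset {τ : Finset V} (hτ : τ ∈ X.faces) {c : ℕ}
    (hτc : τ.card = c) (hc : c ≤ d) :
    ∑ σ ∈ (X.dimFaces (c + 1)).filter (τ ⊆ ·), X.w σ = ((c : ℝ) + 1) * X.w τ := by
  -- Double counting: each top face `T ⊇ τ` contains `d + 1 - c` of the faces `σ`.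
  let tops : Finset V → Finset (Finset V) := fun σ =>
    X.faces.filter fun T => T.card = d + 1 ∧ σ ⊆ T
  have hswap : ∑ σ ∈ (X.dimFaces (c + 1)).filter (τ ⊆ ·), ∑ T ∈ tops σ, X.w T
      = ∑ T ∈ tops τ, ∑ σ ∈ (X.dimFaces (c + 1)).filter (fun σ => τ ⊆ σ ∧ σ ⊆ T), X.w T := by
    refine sum_comm' fun σ T => ?_
    simp only [tops, mem_filter]
    exact ⟨fun ⟨⟨hσ, hτσ⟩, hT, hTc, hσT⟩ => ⟨⟨hσ, hτσ, hσT⟩, hT, hTc, hτσ.trans hσT⟩,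
      fun ⟨⟨hσ, hτσ, hσT⟩, hT, hTc, _⟩ => ⟨⟨hσ, hτσ⟩, hT, hTc, hσT⟩⟩
  have hcount : ∀ T ∈ tops τ,
      ∑ σ ∈ (X.dimFaces (c + 1)).filter (fun σ => τ ⊆ σ ∧ σ ⊆ T), X.w T
        = ((d + 1 - c : ℕ) : ℝ) * X.w T := by
    intro T hT
    obtain ⟨hT, hTc, hτT⟩ := mem_filter.1 hT
    rw [sum_const, X.card_filter_dimFaces_between hT hτT hτc, card_sdiff_of_subset hτT, hTc, hτc,
      nsmul_eq_mul]
  have hw : ∀ σ ∈ (X.dimFaces (c + 1)).filter (τ ⊆ ·),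
      X.w σ = (((d + 1).choose (c + 1) : ℝ))⁻¹ * ∑ T ∈ tops σ, X.w T := by
    intro σ hσ
    obtain ⟨hσ, hσc⟩ := (X.mem_dimFaces _).1 (mem_filter.1 hσ).1
    rw [X.w_eq_choose_inv_mul_sum_top hσ (by omega), hσc]
  have hchoose : ((d + 1).choose (c + 1) : ℝ) * ((c : ℝ) + 1)
      = ((d + 1).choose c : ℝ) * ((d + 1 - c : ℕ) : ℝ) := by
    exact_mod_cast Nat.choose_succ_right_eq (d + 1) c
  have hchoose_succ_ne : ((d + 1).choose (c + 1) : ℝ) ≠ 0 := by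
    exact_mod_cast (Nat.choose_pos (by omega : c + 1 ≤ d + 1)).ne'
  have hchoose_ne : ((d + 1).choose c : ℝ) ≠ 0 := by
    exact_mod_cast (Nat.choose_pos (by omega : c ≤ d + 1)).ne'
  rw [sum_congr rfl hw, ← mul_sum, hswap, sum_congr rfl hcount, ← mul_sum,
    X.w_down τ hτ (by omega), hτc]
  field_simp
  linear_combination -(∑ T ∈ tops τ, X.w T) * hchoose

theorem sAdj_one {c : ℕ} (hc : c ≤ d) {F : Finset V → ℝ} (hF : ∀ σ ∈ X.dimFaces (c + 1), F σ = 1)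
    {τ : Finset V} (hτ : τ ∈ X.dimFaces c) : X.sAdj c F τ = 1 := by
  obtain ⟨hτf, hτc⟩ := (X.mem_dimFaces _).1 hτ
  have hterm : ∀ σ ∈ (X.dimFaces (c + 1)).filter (τ ⊆ ·),
      (X.link τ).w (σ \ τ) * F σ = (((c : ℝ) + 1) * X.w τ)⁻¹ * X.w σ := by
    intro σ hσ
    obtain ⟨hσ, hτσ⟩ := mem_filter.1 hσ
    rw [X.link_w_sdiff_of_card_eq hτf hτσ hτc ((X.mem_dimFaces _).1 hσ).2, hF σ hσ]
    field_simp
  have := (X.w_pos τ hτf).ne'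
  rw [WFam.sAdj, sum_congr rfl hterm, ← mul_sum, X.sum_w_filter_dimFaces_superset hτf hτc hc]
  field_simp

theorem sAdjIter_one (n : ℕ) {a : ℕ} (ha : a + n ≤ d + 1) {F : Finset V → ℝ}
    (hF : ∀ σ ∈ X.dimFaces (a + n), F σ = 1) {τ : Finset V} (hτ : τ ∈ X.dimFaces a) :
    X.sAdjIter a n F τ = 1 := by
  induction n generalizing a τ with
  | zero => exact hF τ hτ
  | succ n ih =>
    refine X.sAdj_one (by omega) (fun σ hσ => ih (by omega) ?_ hσ) hτ
    rwa [show a + (n + 1) = a + 1 + n by omega] at hF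

theorem inner_sDiffIter_one {a n : ℕ} (ha : a + n ≤ d + 1) (G : Finset V → ℝ) :
    X.inner (a + n) (sDiffIter a n G) (fun _ => 1) = X.inner a G (fun _ => 1) := by
  rw [inner_sDiffIter_eq_inner_sAdjIter]
  exact WFam.inner_congr (fun _ _ => rfl) fun τ hτ => X.sAdjIter_one n ha (fun _ _ => rfl) hτ

theorem inner_sAdjIter_one (a n : ℕ) (F : Finset V → ℝ) :
    X.inner a (X.sAdjIter a n F) (fun _ => 1) = X.inner (a + n) F (fun _ => 1) := by
  rw [WFam.inner_comm, ← inner_sDiffIter_eq_inner_sAdjIter, WFam.inner_comm]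
  exact WFam.inner_congr (fun _ _ => rfl) fun σ hσ =>
    sDiffIter_one a n ((X.mem_dimFaces _).1 hσ).2

end WSC

theorem exists_eq_of_sq_le_mul_of_sq_le_mul {H A B Q R : ℝ} (hA : 0 ≤ A) (hB : 0 ≤ B)
    (hAHB : A ^ 2 ≤ H * B) (hBQA : B ^ 2 ≤ Q * A) :
    ∃ a b : ℝ, a ^ 2 * H + 2 * a * b * A + b ^ 2 * B = A ∧
      a ^ 2 * A + 2 * a * b * R + b ^ 2 * Q = B := by
  rcases hA.eq_or_lt with rfl | hA
  · exact ⟨0, 0, by ring, by nlinarith⟩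
  have hB : 0 < B := hB.lt_of_ne (by rintro rfl; nlinarith)
  have hH : 0 < H := by nlinarith
  -- Along the segment from `(1, 0)` to `(0, 1)`, `A * N - B * P` goes from `≤ 0` to `≥ 0`.
  let P : ℝ → ℝ := fun t => (1 - t) ^ 2 * H + 2 * (1 - t) * t * A + t ^ 2 * B
  let N : ℝ → ℝ := fun t => (1 - t) ^ 2 * A + 2 * (1 - t) * t * R + t ^ 2 * Q
  obtain ⟨t, ⟨ht0, ht1⟩, ht⟩ : ∃ t ∈ Set.Icc (0 : ℝ) 1, A * N t - B * P t = 0 :=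
    intermediate_value_Icc zero_le_one (by fun_prop)
      ⟨by simp only [P, N]; nlinarith, by simp only [P, N]; nlinarith⟩
  have hP : 0 < P t := by
    have : 0 ≤ 2 * (1 - t) * t * A := by have := sub_nonneg.2 ht1; positivity
    rcases ht1.lt_or_eq with ht1 | rfl
    · have := mul_pos (pow_pos (sub_pos.2 ht1) 2) hH
      simp only [P]; nlinarith
    · simp only [P]; nlinarith
  have hs : √(A / P t) ^ 2 = A / P t := Real.sq_sqrt (by positivity)
  refine ⟨√(A / P t) * (1 - t), √(A / P t) * t, ?_, ?_⟩
  · calc _ = √(A / P t) ^ 2 * P t := by ring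
      _ = A := by rw [hs, div_mul_cancel₀ _ hP.ne']
  · calc _ = √(A / P t) ^ 2 * N t := by ring
      _ = B := by rw [hs]; field_simp; linarith

theorem proper_zero_level_descend_general (X : WSC V d) (k : ℕ) (hk : k ≤ d)
    (f : Finset V → ℝ)
    (him : ∃ h : Finset V → ℝ,
      ∀ σ ∈ X.toWFam.dimFaces (k + 1), f σ = sDiffIter 1 k h σ)
    (hker : X.toWFam.sAdjIter 0 (k + 1) f ∅ = 0) :
    ∃ g : Finset V → ℝ,
      X.toWFam.inner 1 g (fun _ => 1) = 0 ∧
      X.toWFam.norm2 1 g = X.toWFam.norm2 (k + 1) f ∧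
      X.toWFam.norm2 1 (X.toWFam.sAdjIter 1 k f) =
        X.toWFam.norm2 (k + 1) (sDiffIter 1 k g) := by
  obtain ⟨h, him⟩ := him
  set u := X.sAdjIter 1 k f
  have adj (G : Finset V → ℝ) : X.inner (k + 1) (sDiffIter 1 k G) f = X.inner 1 G u := by
    rw [add_comm]; exact X.inner_sDiffIter_eq_inner_sAdjIter 1 k G f
  have hDh : ∀ σ ∈ X.dimFaces (k + 1), sDiffIter 1 k h σ = f σ := fun σ hσ => (him σ hσ).symm
  have hf1 : X.inner (k + 1) f (fun _ => 1) = 0 := by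
    rw [← zero_add (k + 1), ← X.inner_sAdjIter_one, X.inner_zero_eq_w_empty, hker, zero_mul,
      mul_zero]
  have hu1 : X.inner 1 u (fun _ => 1) = 0 := by rw [X.inner_sAdjIter_one, add_comm, hf1]
  have hh1 : X.inner 1 h (fun _ => 1) = 0 := by
    rw [← X.inner_sDiffIter_one (a := 1) (n := k) (by omega), add_comm,
      WFam.inner_congr hDh fun _ _ => rfl, hf1]
  have hhu : X.inner 1 h u = X.norm2 (k + 1) f := by
    rw [← adj]
    exact WFam.inner_congr hDh fun _ _ => rfl
  obtain ⟨a, b, hnorm, hdiff⟩ := exists_eq_of_sq_le_mul_of_sq_le_mul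
    (R := X.inner (k + 1) (sDiffIter 1 k h) (sDiffIter 1 k u))
    (X.norm2_nonneg X.w_nonneg f) (X.norm2_nonneg X.w_nonneg u)
    (hhu ▸ X.inner_sq_le_norm2_mul_norm2 X.w_nonneg h u)
    (adj u ▸ X.inner_sq_le_norm2_mul_norm2 X.w_nonneg (sDiffIter 1 k u) f)
  refine ⟨fun σ => a * h σ + b * u σ, ?_, ?_, ?_⟩
  · rw [WFam.inner_linearCombination_left, hh1, hu1, mul_zero, mul_zero, add_zero]
  · rw [WFam.norm2_linearCombination, hhu, hnorm]
  · have hnormDh : X.norm2 (k + 1) (sDiffIter 1 k h) = X.norm2 (k + 1) f :=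
      WFam.inner_congr hDh hDh
    rw [sDiffIter_linearCombination, WFam.norm2_linearCombination, hnormDh, hdiff]

/-- For `1 ≤ k ≤ d` and a proper `0`-level cochain
`f ∈ C^k(X;ℝ)`, i.e. `f ∈ im(d_{k-1} ⋯ d_0)` (on the faces of `X(k)`) and
`d_{-1}^* ⋯ d_{k-1}^* f = 0`, there exists a `0`-cochain `g ∈ C^0(X;ℝ)` with:
(1) `⟨g, 1⟩ = 0`; (2) `‖g‖² = ‖f‖²`; and
(3) `‖d_0^* ⋯ d_{k-1}^* f‖² = ‖d_{k-1} ⋯ d_0 g‖²`. -/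
theorem proper_zero_level_descend (X : WSC V d) (k : ℕ) (hk1 : 1 ≤ k) (hk : k ≤ d)
    (f : Finset V → ℝ)
    (him : ∃ h : Finset V → ℝ,
      ∀ σ ∈ X.toWFam.dimFaces (k + 1), f σ = sDiffIter 1 k h σ)
    (hker : X.toWFam.sAdjIter 0 (k + 1) f ∅ = 0) :
    ∃ g : Finset V → ℝ,
      X.toWFam.inner 1 g (fun _ => 1) = 0 ∧
      X.toWFam.norm2 1 g = X.toWFam.norm2 (k + 1) f ∧
      X.toWFam.norm2 1 (X.toWFam.sAdjIter 1 k f) =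
        X.toWFam.norm2 (k + 1) (sDiffIter 1 k g) :=
  proper_zero_level_descend_general X k hk f him hker

end

end HDRW
end
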